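/- Let p₁, p₂ be conditions in the poset P and let C = dom(p₁) ∩ dom(p₂). If p₁↾C ≥ p₂↾C and height(p₁) ≥ height(p₂), then p₁ and p₂ are compatible in P. -/

import Mathlib

open Set

/-- The first uncountable ordinal. -/
noncomputable def omega1 : Ordinal := (Cardinal.aleph 1).ord

/-- `D` is a club subset of `ω₁` : it is closed under suprema of its (nonempty)
bounded subsets and unbounded in `ω₁`. -/
def IsClubOmega1 (D : Set Ordinal) : Prop :=
  D ⊆ Iio omega1 ∧
  (∀ s ⊆ D, s.Nonempty → sSup s < omega1 → sSup s ∈ D) ∧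
  (∀ α < omega1, ∃ δ ∈ D, α < δ)

/-- `S` is a stationary subset of `ω₁` : it meets every club. -/
def IsStationaryOmega1 (S : Set Ordinal) : Prop :=
  S ⊆ Iio omega1 ∧ ∀ D, IsClubOmega1 D → (S ∩ D).Nonempty

/-- The linear order `<_I` on `I = (ω₁ × {0}) ∪ (ω₁ × {1})` of order type
`ω₁ + ω₁*`: `⟨α,0⟩ <_I ⟨β,0⟩ <_I ⟨β,1⟩ <_I ⟨α,1⟩` whenever `α < β`. -/
def Ilt (i j : Ordinal × Fin 2) : Prop :=
  (i.2 = 0 ∧ j.2 = 1) ∨ (i.2 = 0 ∧ j.2 = 0 ∧ i.1 < j.1) ∨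
    (i.2 = 1 ∧ j.2 = 1 ∧ j.1 < i.1)

/-- A condition in the Hechler-style poset `P`.  A condition is a finite
function on `I = ω₁ × {0,1}` whose domain is closed under `⟨α,ε⟩ ↦ ⟨α,1-ε⟩`
(so it is coded by the finite set `dom ⊆ ω₁` of first coordinates), assigning
to each `i ∈ dom × {0,1}` a characteristic function of height `ht`, coded by
the set `v i ⊆ {0,…,ht-1}` it represents, with `[p(⟨α,0⟩)] ⊆ [p(⟨α,1⟩)]`. -/
structure PCond where
  dom : Set Ordinal
  finite : dom.Finite
  small : ∀ α ∈ dom, α < omega1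
  ht : ℕ
  v : Ordinal × Fin 2 → Set ℕ
  v_ht : ∀ α ∈ dom, ∀ ε : Fin 2, v (α, ε) ⊆ Iio ht
  v_sub : ∀ α ∈ dom, v (α, 0) ⊆ v (α, 1)

/-- The order on `P` : `p ≤ q` iff `dom p ⊆ dom q`, each `p(i)` is an initial
segment of `q(i)` (as characteristic functions, i.e. `[q(i)] ∩ ht p = [p(i)]`),
and `[q(i)] \ [p(i)] ⊆ [q(j)]` whenever `i <_I j` are in the domain of `p`. -/
def PCond.le (p q : PCond) : Prop :=
  p.dom ⊆ q.dom ∧ p.ht ≤ q.ht ∧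
  (∀ α ∈ p.dom, ∀ ε : Fin 2, q.v (α, ε) ∩ Iio p.ht = p.v (α, ε)) ∧
  ∀ i j : Ordinal × Fin 2, i.1 ∈ p.dom → j.1 ∈ p.dom → Ilt i j →
    q.v i \ p.v i ⊆ q.v j

/-- Compatibility in `P` : existence of a common extension. -/
def PCond.Compatible (p q : PCond) : Prop := ∃ r : PCond, p.le r ∧ q.le r

/-- The restriction `p↾A` of a condition `p` to a set `A ⊆ ω₁` (coding the
flip-closed set of pairs `A × {0,1}`). -/
def PCond.restrict (p : PCond) (A : Set Ordinal) : PCond where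
  dom := p.dom ∩ A
  finite := p.finite.inter_of_left A
  small := fun α hα => p.small α hα.1
  ht := p.ht
  v := p.v
  v_ht := fun α hα => p.v_ht α hα.1
  v_sub := fun α hα => p.v_sub α hα.1

lemma Ilt_trans {i j k : Ordinal × Fin 2} (h1 : Ilt i j) (h2 : Ilt j k) : Ilt i k := by
  obtain ⟨a, ε⟩ := i; obtain ⟨b, δ⟩ := j; obtain ⟨c, ζ⟩ := k
  simp only [Ilt] at *
  fin_cases ε <;> fin_cases δ <;> fin_cases ζ <;> simp_all <;>
    first
      | exact lt_trans h1 h2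
      | exact lt_trans h2 h1

/-- If `C = dom p₁ ∩ dom p₂`, `p₁↾C ≥ p₂↾C` and `ht p₁ ≥ ht p₂`, then `p₁`
and `p₂` are compatible in `P`. -/
theorem P_compatible_of_restrict_le (p₁ p₂ : PCond)
    (h : (p₂.restrict (p₁.dom ∩ p₂.dom)).le (p₁.restrict (p₁.dom ∩ p₂.dom)))
    (hht : p₂.ht ≤ p₁.ht) :
    p₁.Compatible p₂ := by
  classical
  obtain ⟨hdom, hhle, hinit, hord⟩ := h
  set C : Set Ordinal := p₁.dom ∩ p₂.dom with hC
  have hinit' : ∀ α ∈ C, ∀ ε : Fin 2, p₁.v (α, ε) ∩ Iio p₂.ht = p₂.v (α, ε) :=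
    fun α hα ε => hinit α ⟨hα.2, hα⟩ ε
  have hord' : ∀ i j : Ordinal × Fin 2, i.1 ∈ C → j.1 ∈ C → Ilt i j →
      p₁.v i \ p₂.v i ⊆ p₁.v j :=
    fun i j hi hj hij => hord i j ⟨hi.2, hi⟩ ⟨hj.2, hj⟩ hij
  -- new bits above ht p₂ coming from p₁ at coordinates of C below i
  set X : Ordinal × Fin 2 → Set ℕ :=
    fun i => {n | p₂.ht ≤ n ∧ ∃ k : Ordinal × Fin 2, k.1 ∈ C ∧ Ilt k i ∧ n ∈ p₁.v k}
    with hX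
  set V : Ordinal × Fin 2 → Set ℕ :=
    fun i => if i.1 ∈ p₁.dom then p₁.v i else p₂.v i ∪ X i with hV
  have hV1 : ∀ i : Ordinal × Fin 2, i.1 ∈ p₁.dom → V i = p₁.v i := by
    intro i hi; simp [hV, hi]
  have hV2 : ∀ i : Ordinal × Fin 2, i.1 ∉ p₁.dom → V i = p₂.v i ∪ X i := by
    intro i hi; simp [hV, hi]
  -- the diff of p₁ over p₂ on C lies above ht p₂
  have hdiff : ∀ i : Ordinal × Fin 2, i.1 ∈ C →
      p₁.v i \ p₂.v i ⊆ {n | p₂.ht ≤ n ∧ n ∈ p₁.v i} := by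
    rintro ⟨α, ε⟩ hi n ⟨hn1, hn2⟩
    refine ⟨?_, hn1⟩
    by_contra hlt
    exact hn2 ((hinit' α hi ε) ▸ ⟨hn1, lt_of_not_ge hlt⟩)
  refine ⟨⟨p₁.dom ∪ p₂.dom, p₁.finite.union p₂.finite, ?_, p₁.ht, V, ?_, ?_⟩, ?_, ?_⟩
  · rintro α (hα | hα)
    exacts [p₁.small α hα, p₂.small α hα]
  · -- v_ht
    rintro α hα ε n hn
    by_cases h1 : α ∈ p₁.dom
    · rw [hV1 _ h1] at hn; exact p₁.v_ht α h1 ε hn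
    · rw [hV2 _ h1] at hn
      rcases hn with hn | ⟨-, k, hkC, -, hnk⟩
      · exact lt_of_lt_of_le (p₂.v_ht α (hα.resolve_left h1) ε hn) hht
      · exact p₁.v_ht k.1 hkC.1 k.2 hnk
  · -- v_sub
    rintro α hα n hn
    by_cases h1 : α ∈ p₁.dom
    · rw [hV1 _ h1] at hn ⊢; exact p₁.v_sub α h1 hn
    · rw [hV2 _ h1] at hn ⊢
      rcases hn with hn | ⟨hn, k, hkC, hki, hnk⟩
      · exact Or.inl (p₂.v_sub α (hα.resolve_left h1) hn)
      · exact Or.inr ⟨hn, k, hkC, Ilt_trans hki (Or.inl ⟨rfl, rfl⟩), hnk⟩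
  · -- p₁ ≤ r
    refine ⟨subset_union_left, le_refl _, ?_, ?_⟩
    · intro α hα ε
      dsimp only
      rw [hV1 _ hα]
      exact inter_eq_left.mpr (p₁.v_ht α hα ε)
    · intro i j hi _ _
      dsimp only
      rw [hV1 _ hi]
      simp
  · -- p₂ ≤ r
    refine ⟨subset_union_right, hht, ?_, ?_⟩
    · intro α hα ε
      dsimp only
      by_cases h1 : α ∈ p₁.dom
      · rw [hV1 _ h1]; exact hinit' α ⟨h1, hα⟩ ε
      · rw [hV2 _ h1, union_inter_distrib_right]
        have : X (α, ε) ∩ Iio p₂.ht = ∅ := by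
          ext n; simp only [hX, mem_inter_iff, mem_setOf_eq, mem_Iio, mem_empty_iff_false,
            iff_false, not_and]
          rintro ⟨hn, -⟩; exact not_lt_of_ge hn
        rw [this, union_empty]
        exact inter_eq_left.mpr (p₂.v_ht α hα ε)
    · intro i j hi hj hij
      dsimp only
      intro n hn
      by_cases h1 : i.1 ∈ p₁.dom
      · -- i lies in C
        rw [hV1 _ h1] at hn
        have hiC : i.1 ∈ C := ⟨h1, hi⟩
        obtain ⟨hn1, hn2⟩ := hdiff i hiC hn
        by_cases h2 : j.1 ∈ p₁.dom
        · rw [hV1 _ h2]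
          exact hord' i j hiC ⟨h2, hj⟩ hij hn
        · rw [hV2 _ h2]
          exact Or.inr ⟨hn1, i, hiC, hij, hn2⟩
      · rw [hV2 _ h1] at hn
        have hn' : n ∈ X i := by
          rcases hn with ⟨hn | hn, hn2⟩
          · exact absurd hn hn2
          · exact hn
        obtain ⟨hn1, k, hkC, hki, hnk⟩ := hn'
        have hkj : Ilt k j := Ilt_trans hki hij
        by_cases h2 : j.1 ∈ p₁.dom
        · rw [hV1 _ h2]
          refine hord' k j hkC ⟨h2, hj⟩ hkj ⟨hnk, fun hmem => ?_⟩
          exact not_lt_of_ge hn1 (p₂.v_ht k.1 hkC.2 k.2 hmem)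
        · rw [hV2 _ h2]
          exact Or.inr ⟨hn1, k, hkC, hkj, hnk⟩
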